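/- Let ρ ∈ 𝓗^d ⊗ 𝓗^d be Hermitian with ρ_max := max_{i,j∈[d]} ρ_{ij,ij} > 0, let t ≥ 2 be an integer, and set R = 2d·√ρ_max. Then for every Hermitian matrix Λ ∈ ℂ^{d²×d²} with operator norm ‖Λ‖ ≤ R^{−2}, the polynomial 1 − ∑_{i,i',j,j'∈[d]} conj(Λ_{ij,i'j'}) · x_i x̄_{i'} y_j ȳ_{j'} belongs to the truncated quadratic module 𝓜(S_ρ)_{2t}. In particular Λ = 0 lies in the interior of the feasible region of the dual program. -/

import Mathlib

/-!
Put `r = R⁻²`. Since `Λ` is Hermitian with `‖Λ‖ ≤ r`, the matrix `r • 1 - Λ` is positive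
semidefinite, hence a sum of rank-one terms `v v*`; the term `v v*` pairs with `xx* ⊗ yy*` to the
Hermitian square `p p̄` of the bilinear form `p = ∑ v̄_{ij} x_i y_j`. So
`r ‖x‖² ‖y‖² - ⟨Λ, xx* ⊗ yy*⟩` is a sum of squares of degree 4. The rest, `1 - r ‖x‖² ‖y‖²`,
is handled by an explicit identity in `u = ‖x‖²`, `v = ‖y‖²` and `a = d √ρ_max`: there
`a - u = ∑ᵢ (√ρ_max - x_i x̄_i)` and `a - v` are sums of localizing polynomials, and every term
has degree at most `4 ≤ 2t`.
-/

open MvPolynomial ComplexOrder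
open scoped ENNReal

/-- Variables of `ℂ[x,x̄,y,ȳ]` for the bipartite setting: `x_i, x̄_i, y_j, ȳ_j`. -/
abbrev SVar (d : ℕ) := (Fin d ⊕ Fin d) ⊕ (Fin d ⊕ Fin d)

/-- The polynomial ring `ℂ[x,x̄,y,ȳ]`. -/
abbrev SPoly (d : ℕ) := MvPolynomial (SVar d) ℂ

def xv {d : ℕ} (i : Fin d) : SVar d := Sum.inl (Sum.inl i)
def xbv {d : ℕ} (i : Fin d) : SVar d := Sum.inl (Sum.inr i)
def yv {d : ℕ} (j : Fin d) : SVar d := Sum.inr (Sum.inl j)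
def ybv {d : ℕ} (j : Fin d) : SVar d := Sum.inr (Sum.inr j)

/-- The conjugate polynomial: conjugate the coefficients and exchange each
variable with its barred version. -/
noncomputable def sconj {d : ℕ} (p : SPoly d) : SPoly d :=
  rename (Sum.map (Sum.elim Sum.inr Sum.inl) (Sum.elim Sum.inr Sum.inl))
    (map (starRingEnd ℂ) p)

/-- The matrix `xx* ⊗ yy*`, with rows and columns indexed by pairs `(i,j)`. -/
noncomputable def pureState (d : ℕ) (x y : Fin d → ℂ) :
    Matrix (Fin d × Fin d) (Fin d × Fin d) ℂ :=
  Matrix.of fun p q => x p.1 * starRingEnd ℂ (x q.1) * (y p.2 * starRingEnd ℂ (y q.2))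

/-- The cone of (unnormalized) separable states. -/
def SEP (d : ℕ) : Set (Matrix (Fin d × Fin d) (Fin d × Fin d) ℂ) :=
  { ρ | ∃ (r : ℕ) (c : Fin r → ℝ) (x y : Fin r → (Fin d → ℂ)),
      (∀ ℓ, 0 ≤ c ℓ) ∧ (∀ ℓ, ∑ i, Complex.normSq (x ℓ i) = 1) ∧
      (∀ ℓ, ∑ i, Complex.normSq (y ℓ i) = 1) ∧
      ρ = ∑ ℓ, (c ℓ : ℂ) • pureState d (x ℓ) (y ℓ) }

/-- Largest diagonal entry `ρ_max` of `ρ`. -/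
noncomputable def rhoMax (d : ℕ) (ρ : Matrix (Fin d × Fin d) (Fin d × Fin d) ℂ) : ℝ :=
  ⨆ p : Fin d × Fin d, (ρ p p).re

/-- The degree-four monomial `x_i x̄_{i'} y_j ȳ_{j'}`. -/
noncomputable def momPoly {d : ℕ} (i i' j j' : Fin d) : SPoly d :=
  X (xv i) * X (xbv i') * X (yv j) * X (ybv j')

/-- The localizing polynomials `S_ρ`. -/
noncomputable def Sloc (d : ℕ) (ρ : Matrix (Fin d × Fin d) (Fin d × Fin d) ℂ) :
    Set (SPoly d) :=
  (Set.range fun i : Fin d =>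
    (C ((Real.sqrt (rhoMax d ρ) : ℂ)) : SPoly d) - X (xv i) * X (xbv i)) ∪
  (Set.range fun j : Fin d =>
    (C ((Real.sqrt (rhoMax d ρ) : ℂ)) : SPoly d) - X (yv j) * X (ybv j))

/-- The truncated quadratic module `𝓜(S)_{2t}`. -/
def QMt (d : ℕ) (S : Set (SPoly d)) (t : ℕ) : Set (SPoly d) :=
  { q | ∃ (N : ℕ) (c : Fin N → ℝ) (g p : Fin N → SPoly d),
      (∀ s, 0 ≤ c s) ∧ (∀ s, g s ∈ S ∪ {1}) ∧
      (∀ s, (g s * (p s * sconj (p s))).totalDegree ≤ 2 * t) ∧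
      q = ∑ s, C (c s : ℂ) * (g s * (p s * sconj (p s))) }

/-- The (untruncated) quadratic module `𝓜(S)`. -/
def QMf (d : ℕ) (S : Set (SPoly d)) : Set (SPoly d) :=
  { q | ∃ (N : ℕ) (c : Fin N → ℝ) (g p : Fin N → SPoly d),
      (∀ s, 0 ≤ c s) ∧ (∀ s, g s ∈ S ∪ {1}) ∧
      q = ∑ s, C (c s : ℂ) * (g s * (p s * sconj (p s))) }

/-- Feasibility for the order-`t` program defining `ξ_t^sep(ρ)`. -/
def IsFeas (d t : ℕ) (ρ : Matrix (Fin d × Fin d) (Fin d × Fin d) ℂ)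
    (L : SPoly d →ₗ[ℂ] ℂ) : Prop :=
  (∀ p, L (sconj p) = star (L p)) ∧
  (∀ i i' j j', L (momPoly i i' j j') = ρ (i, j) (i', j')) ∧
  (∀ q ∈ QMt d (Sloc d ρ) t, 0 ≤ L q) ∧
  (∀ q : Fin d → Fin d → SPoly d, (∀ i j, (q i j).totalDegree ≤ t - 2) →
    0 ≤ ∑ i, ∑ j, ∑ i', ∑ j',
      L ((C (ρ (i, j) (i', j')) - momPoly i i' j j') * (q i j * sconj (q i' j'))))

/-- Feasibility for the order-`∞` program. -/
def IsFeasInf (d : ℕ) (ρ : Matrix (Fin d × Fin d) (Fin d × Fin d) ℂ)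
    (L : SPoly d →ₗ[ℂ] ℂ) : Prop :=
  (∀ p, L (sconj p) = star (L p)) ∧
  (∀ i i' j j', L (momPoly i i' j j') = ρ (i, j) (i', j')) ∧
  (∀ q ∈ QMf d (Sloc d ρ), 0 ≤ L q) ∧
  (∀ q : Fin d → Fin d → SPoly d,
    0 ≤ ∑ i, ∑ j, ∑ i', ∑ j',
      L ((C (ρ (i, j) (i', j')) - momPoly i i' j j') * (q i j * sconj (q i' j'))))

/-- `ξ_t^sep(ρ)`. -/
noncomputable def xiSep (d t : ℕ) (ρ : Matrix (Fin d × Fin d) (Fin d × Fin d) ℂ) : ℝ≥0∞ :=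
  sInf { e | ∃ L : SPoly d →ₗ[ℂ] ℂ, IsFeas d t ρ L ∧ e = ENNReal.ofReal (L 1).re }

/-- `ξ_∞^sep(ρ)`. -/
noncomputable def xiSepInf (d : ℕ) (ρ : Matrix (Fin d × Fin d) (Fin d × Fin d) ℂ) : ℝ≥0∞ :=
  sInf { e | ∃ L : SPoly d →ₗ[ℂ] ℂ, IsFeasInf d ρ L ∧ e = ENNReal.ofReal (L 1).re }


namespace SPoly

variable {d : ℕ}

lemma sconj_mul (p q : SPoly d) : sconj (p * q) = sconj p * sconj q := by
  simp only [sconj, map_mul]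

lemma sconj_one : sconj (1 : SPoly d) = 1 := by
  simp [sconj]

lemma sconj_sum {ι : Type*} (s : Finset ι) (f : ι → SPoly d) :
    sconj (∑ i ∈ s, f i) = ∑ i ∈ s, sconj (f i) := by
  simp only [sconj, map_sum]

lemma sconj_C (a : ℂ) : sconj (C a : SPoly d) = C (starRingEnd ℂ a) := by
  simp [sconj]

lemma sconj_X_xv (i : Fin d) : sconj (X (xv i) : SPoly d) = X (xbv i) := by
  simp [sconj, xv, xbv]

lemma sconj_X_yv (j : Fin d) : sconj (X (yv j) : SPoly d) = X (ybv j) := by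
  simp [sconj, yv, ybv]

lemma totalDegree_sconj_le (p : SPoly d) : (sconj p).totalDegree ≤ p.totalDegree :=
  (totalDegree_rename_le _ _).trans (Finset.sup_mono (support_map_subset _ _))

lemma totalDegree_mul_mul_sconj_le (g p : SPoly d) :
    (g * (p * sconj p)).totalDegree ≤ g.totalDegree + 2 * p.totalDegree := by
  have := totalDegree_sconj_le p
  have := totalDegree_mul p (sconj p)
  have := totalDegree_mul g (p * sconj p)
  omega

lemma totalDegree_C_sub_X_mul_X_le (c : ℂ) (v w : SVar d) :
    (C c - X v * X w : SPoly d).totalDegree ≤ 2 :=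
  (totalDegree_sub _ _).trans <| max_le (by simp) <|
    (totalDegree_mul _ _).trans (by simp [totalDegree_X])

end SPoly

namespace QMt

open SPoly

variable {d t : ℕ} {S : Set (SPoly d)}

lemma zero_mem : (0 : SPoly d) ∈ QMt d S t :=
  ⟨0, Fin.elim0, Fin.elim0, Fin.elim0, nofun, nofun, nofun, by simp⟩

lemma add_mem {a b : SPoly d} (ha : a ∈ QMt d S t) (hb : b ∈ QMt d S t) :
    a + b ∈ QMt d S t := by
  obtain ⟨N₁, c₁, g₁, p₁, hc₁, hg₁, hd₁, rfl⟩ := ha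
  obtain ⟨N₂, c₂, g₂, p₂, hc₂, hg₂, hd₂, rfl⟩ := hb
  refine ⟨N₁ + N₂, Fin.append c₁ c₂, Fin.append g₁ g₂, Fin.append p₁ p₂,
    Fin.addCases (by simpa using hc₁) (by simpa using hc₂),
    Fin.addCases (by simpa using hg₁) (by simpa using hg₂),
    Fin.addCases (by simpa using hd₁) (by simpa using hd₂), ?_⟩
  simp [Fin.sum_univ_add]

lemma sum_mem {ι : Type*} (s : Finset ι) {f : ι → SPoly d} (h : ∀ i ∈ s, f i ∈ QMt d S t) :
    ∑ i ∈ s, f i ∈ QMt d S t :=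
  Finset.sum_induction f (· ∈ QMt d S t) (fun _ _ => add_mem) zero_mem h

lemma smul_mem {c : ℝ} (hc : 0 ≤ c) {q : SPoly d} (hq : q ∈ QMt d S t) :
    c • q ∈ QMt d S t := by
  obtain ⟨N, c', g, p, hc', hg, hdeg, rfl⟩ := hq
  refine ⟨N, fun s => c * c' s, g, p, fun s => mul_nonneg hc (hc' s), hg, hdeg, ?_⟩
  simp only [Finset.smul_sum, ← Complex.coe_smul, smul_eq_C_mul, ← mul_assoc, ← C_mul,
    Complex.ofReal_mul]

lemma mul_mul_sconj_mem {g p : SPoly d} (hg : g ∈ S ∪ {1})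
    (hdeg : g.totalDegree + 2 * p.totalDegree ≤ 2 * t) : g * (p * sconj p) ∈ QMt d S t :=
  ⟨1, fun _ => 1, fun _ => g, fun _ => p, fun _ => zero_le_one, fun _ => hg,
    fun _ => (totalDegree_mul_mul_sconj_le g p).trans hdeg, by simp⟩

lemma mem_of_mem_union_one {g : SPoly d} (hg : g ∈ S ∪ {1}) (hdeg : g.totalDegree ≤ 2 * t) :
    g ∈ QMt d S t := by
  simpa [sconj_one] using mul_mul_sconj_mem (p := 1) hg (by simpa using hdeg)

lemma one_mem : (1 : SPoly d) ∈ QMt d S t :=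
  mem_of_mem_union_one (Set.mem_union_right _ rfl) (by simp)

end QMt

open SPoly

/-- `normSq v w = ∑ i, X (v i) * X (w i)`, which is `‖x‖²` for `(v, w) = (xv, xbv)`
and `‖y‖²` for `(v, w) = (yv, ybv)`. -/
noncomputable def normSq {d : ℕ} (v w : Fin d → SVar d) : SPoly d :=
  ∑ i, X (v i) * X (w i)

-- Every summand on the right lies in the quadratic module when `u, v` are squared norms
-- and `a = d √ρ_max`, since then `a • 1 - u` is a sum of localizing polynomials.
lemma one_sub_inv_smul_mul_eq {K A : Type*} [Field K] [CharZero K] [CommRing A] [Algebra K A]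
    {a : K} (ha : a ≠ 0) (u v : A) :
    1 - (4 * a ^ 2)⁻¹ • (u * v) =
      (2⁻¹ : K) • 1 + (8 * a)⁻¹ • (u + v) + (4 * a)⁻¹ • ((a • 1 - u) + (a • 1 - v)) +
        (8 * a ^ 2)⁻¹ • ((a • 1 - u) * v + (a • 1 - v) * u) := by
  simp only [sub_mul, smul_mul_assoc, one_mul, mul_comm v u]
  match_scalars <;> field_simp <;> ring

lemma smul_one_sub_normSq {d : ℕ} (s : ℝ) (v w : Fin d → SVar d) :
    ((d : ℝ) * s) • (1 : SPoly d) - normSq v w = ∑ i, (C (s : ℂ) - X (v i) * X (w i)) := by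
  rw [Finset.sum_sub_distrib, normSq, Finset.sum_const, Finset.card_univ, Fintype.card_fin,
    mul_smul, Nat.cast_smul_eq_nsmul, ← Complex.coe_smul, smul_eq_C_mul, mul_one]

lemma normSq_mul_mem {d t : ℕ} {S : Set (SPoly d)} {v w : Fin d → SVar d}
    (hvw : ∀ i, sconj (X (v i)) = X (w i)) {g : SPoly d} (hg : g ∈ S ∪ {1})
    (hdeg : g.totalDegree + 2 ≤ 2 * t) : g * normSq v w ∈ QMt d S t := by
  rw [normSq, Finset.mul_sum]
  refine QMt.sum_mem _ fun i _ => ?_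
  rw [← hvw]
  exact QMt.mul_mul_sconj_mem hg (by simpa [totalDegree_X] using hdeg)

lemma pos_of_rhoMax_pos {d : ℕ} {ρ : Matrix (Fin d × Fin d) (Fin d × Fin d) ℂ}
    (hmax : 0 < rhoMax d ρ) : 0 < d :=
  Nat.pos_of_ne_zero <| by rintro rfl; simp [rhoMax] at hmax

lemma one_sub_smul_normSq_mul_normSq_mem {d t : ℕ}
    {ρ : Matrix (Fin d × Fin d) (Fin d × Fin d) ℂ} (hmax : 0 < rhoMax d ρ) (ht : 2 ≤ t) :
    1 - ((2 * (d : ℝ) * Real.sqrt (rhoMax d ρ)) ^ 2)⁻¹ • (normSq xv xbv * normSq yv ybv)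
      ∈ QMt d (Sloc d ρ) t := by
  set s := Real.sqrt (rhoMax d ρ)
  have hs : 0 < s := Real.sqrt_pos.mpr hmax
  have hd : (0 : ℝ) < d := Nat.cast_pos.mpr (pos_of_rhoMax_pos hmax)
  have hx : ∀ i, C (s : ℂ) - X (xv i) * X (xbv i) ∈ Sloc d ρ ∪ {1} :=
    fun i => Or.inl (Or.inl ⟨i, rfl⟩)
  have hy : ∀ j, C (s : ℂ) - X (yv j) * X (ybv j) ∈ Sloc d ρ ∪ {1} :=
    fun j => Or.inl (Or.inr ⟨j, rfl⟩)
  have hdeg : ∀ v w : SVar d, (C (s : ℂ) - X v * X w).totalDegree + 2 ≤ 2 * t :=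
    fun v w => by have := totalDegree_C_sub_X_mul_X_le (s : ℂ) v w; omega
  have hone : (1 : SPoly d) ∈ Sloc d ρ ∪ {1} := Or.inr rfl
  have ht' : (1 : SPoly d).totalDegree + 2 ≤ 2 * t := by rw [totalDegree_one]; omega
  rw [show (2 * (d : ℝ) * s) ^ 2 = 4 * ((d : ℝ) * s) ^ 2 by ring,
    one_sub_inv_smul_mul_eq (by positivity), smul_one_sub_normSq, smul_one_sub_normSq,
    Finset.sum_mul, Finset.sum_mul]
  refine QMt.add_mem (QMt.add_mem (QMt.add_mem ?_ ?_) ?_) ?_ <;>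
    refine QMt.smul_mem (by positivity) ?_
  · exact QMt.one_mem
  · exact QMt.add_mem (by simpa using normSq_mul_mem sconj_X_xv hone ht')
      (by simpa using normSq_mul_mem sconj_X_yv hone ht')
  · exact QMt.add_mem
      (QMt.sum_mem _ fun i _ => QMt.mem_of_mem_union_one (hx i) (le_of_add_le_left (hdeg _ _)))
      (QMt.sum_mem _ fun j _ => QMt.mem_of_mem_union_one (hy j) (le_of_add_le_left (hdeg _ _)))
  · exact QMt.add_mem (QMt.sum_mem _ fun i _ => normSq_mul_mem sconj_X_yv (hx i) (hdeg _ _))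
      (QMt.sum_mem _ fun j _ => normSq_mul_mem sconj_X_xv (hy j) (hdeg _ _))

/-- `pairingPoly M = ⟨M, xx* ⊗ yy*⟩`. -/
noncomputable def pairingPoly {d : ℕ} (M : Matrix (Fin d × Fin d) (Fin d × Fin d) ℂ) :
    SPoly d :=
  ∑ i, ∑ i', ∑ j, ∑ j', C (starRingEnd ℂ (M (i, j) (i', j'))) * momPoly i i' j j'

lemma pairingPoly_add {d : ℕ} (M N : Matrix (Fin d × Fin d) (Fin d × Fin d) ℂ) :
    pairingPoly (M + N) = pairingPoly M + pairingPoly N := by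
  simp only [pairingPoly, Matrix.add_apply, map_add, add_mul, Finset.sum_add_distrib]

noncomputable def pairingPolyAddHom (d : ℕ) :
    Matrix (Fin d × Fin d) (Fin d × Fin d) ℂ →+ SPoly d :=
  AddMonoidHom.mk' pairingPoly pairingPoly_add

lemma pairingPoly_sub {d : ℕ} (M N : Matrix (Fin d × Fin d) (Fin d × Fin d) ℂ) :
    pairingPoly (M - N) = pairingPoly M - pairingPoly N :=
  map_sub (pairingPolyAddHom d) M N

lemma pairingPoly_eq_sum_prod {d : ℕ} (M : Matrix (Fin d × Fin d) (Fin d × Fin d) ℂ) :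
    pairingPoly M = ∑ p, ∑ q, C (starRingEnd ℂ (M p q)) * momPoly p.1 q.1 p.2 q.2 := by
  simp only [pairingPoly, Fintype.sum_prod_type]
  exact Finset.sum_congr rfl fun i _ => Finset.sum_comm

lemma pairingPoly_smul_one {d : ℕ} (r : ℝ) :
    pairingPoly (r • 1 : Matrix (Fin d × Fin d) (Fin d × Fin d) ℂ) =
      r • (normSq xv xbv * normSq yv ybv) := by
  have hentry : ∀ p q, starRingEnd ℂ ((r • 1 : Matrix (Fin d × Fin d) (Fin d × Fin d) ℂ) p q) =
      if p = q then (r : ℂ) else 0 := fun p q => by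
    by_cases h : p = q <;> simp [h, Complex.real_smul]
  rw [pairingPoly_eq_sum_prod]
  simp only [hentry, apply_ite C, map_zero, ite_mul, zero_mul, Finset.sum_ite_eq, Finset.mem_univ,
    if_true]
  simp only [Fintype.sum_prod_type, normSq, Finset.sum_mul_sum, Finset.smul_sum]
  refine Finset.sum_congr rfl fun i _ => Finset.sum_congr rfl fun j _ => ?_
  rw [← Complex.coe_smul, smul_eq_C_mul, momPoly]
  ring

noncomputable def bilinPoly {d : ℕ} (v : Fin d × Fin d → ℂ) : SPoly d :=
  ∑ p, C (v p) * (X (xv p.1) * X (yv p.2))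

lemma totalDegree_bilinPoly_le {d : ℕ} (v : Fin d × Fin d → ℂ) :
    (bilinPoly v).totalDegree ≤ 2 :=
  totalDegree_finsetSum_le fun p _ => (totalDegree_mul _ _).trans <| by
    simpa using (totalDegree_mul _ _).trans (by simp [totalDegree_X])

lemma pairingPoly_vecMulVec {d : ℕ} (v : Fin d × Fin d → ℂ) :
    pairingPoly (Matrix.vecMulVec v (star v)) =
      bilinPoly (star v) * sconj (bilinPoly (star v)) := by
  rw [pairingPoly_eq_sum_prod, bilinPoly, sconj_sum, Finset.sum_mul_sum]
  refine Finset.sum_congr rfl fun p _ => Finset.sum_congr rfl fun q _ => ?_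
  simp only [Matrix.vecMulVec_apply, sconj_mul, sconj_C, sconj_X_xv, sconj_X_yv, momPoly,
    Pi.star_apply, Complex.star_def, Complex.conj_conj, map_mul]
  ring

lemma pairingPoly_mem_of_posSemidef {d t : ℕ} {S : Set (SPoly d)}
    {M : Matrix (Fin d × Fin d) (Fin d × Fin d) ℂ} (hM : M.PosSemidef) (ht : 2 ≤ t) :
    pairingPoly M ∈ QMt d S t := by
  obtain ⟨m, v, rfl⟩ := Matrix.posSemidef_iff_eq_sum_vecMulVec.mp hM
  change pairingPolyAddHom d _ ∈ _
  rw [map_sum]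
  refine QMt.sum_mem _ fun k _ => ?_
  have hdeg := totalDegree_bilinPoly_le (star (v k))
  simp only [pairingPolyAddHom, AddMonoidHom.mk'_apply, pairingPoly_vecMulVec]
  rw [← one_mul (_ * _)]
  exact QMt.mul_mul_sconj_mem (Or.inr rfl) (by rw [totalDegree_one]; omega)

open scoped Matrix.Norms.L2Operator MatrixOrder in
lemma Matrix.IsHermitian.posSemidef_smul_one_sub {n : Type*} [Fintype n] [DecidableEq n]
    {A : Matrix n n ℂ} (hA : A.IsHermitian) {r : ℝ}
    (hr : ‖Matrix.toEuclideanCLM (𝕜 := ℂ) A‖ ≤ r) :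
    (r • 1 - A).PosSemidef := by
  rw [← Matrix.nonneg_iff_posSemidef, sub_nonneg, ← Algebra.algebraMap_eq_smul_one]
  calc A ≤ algebraMap ℝ _ ‖A‖ := IsSelfAdjoint.le_algebraMap_norm_self hA
    _ ≤ algebraMap ℝ _ r := by gcongr; exact hr

theorem stmt18_general {d : ℕ} (ρ : Matrix (Fin d × Fin d) (Fin d × Fin d) ℂ)
    (hmax : 0 < rhoMax d ρ) (t : ℕ) (ht : 2 ≤ t)
    (Λ : Matrix (Fin d × Fin d) (Fin d × Fin d) ℂ) (hΛ : Λ.IsHermitian)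
    (hnorm : ‖Matrix.toEuclideanCLM (𝕜 := ℂ) Λ‖ ≤
      ((2 * (d : ℝ) * Real.sqrt (rhoMax d ρ)) ^ 2)⁻¹) :
    ((1 : SPoly d) - ∑ i, ∑ i', ∑ j, ∑ j',
        C (starRingEnd ℂ (Λ (i, j) (i', j'))) * momPoly i i' j j')
      ∈ QMt d (Sloc d ρ) t := by
  set r := ((2 * (d : ℝ) * Real.sqrt (rhoMax d ρ)) ^ 2)⁻¹
  have hsplit : 1 - pairingPoly Λ =
      (1 - r • (normSq xv xbv * normSq yv ybv)) + pairingPoly (r • 1 - Λ) := by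
    rw [pairingPoly_sub, pairingPoly_smul_one]
    abel
  change 1 - pairingPoly Λ ∈ _
  rw [hsplit]
  exact QMt.add_mem (one_sub_smul_normSq_mul_normSq_mem hmax ht)
    (pairingPoly_mem_of_posSemidef (hΛ.posSemidef_smul_one_sub hnorm) ht)

/-- for Hermitian `ρ` with `ρ_max > 0`, `t ≥ 2` and
`R = 2d√ρ_max`, every Hermitian `Λ` with operator norm `‖Λ‖ ≤ R⁻²` yields a
polynomial `1 − ⟨Λ, xx*⊗yy*⟩` lying in the truncated quadratic module
`𝓜(S_ρ)_{2t}`. -/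
theorem stmt18 {d : ℕ} (ρ : Matrix (Fin d × Fin d) (Fin d × Fin d) ℂ)
    (hρ : ρ.IsHermitian) (hmax : 0 < rhoMax d ρ) (t : ℕ) (ht : 2 ≤ t)
    (Λ : Matrix (Fin d × Fin d) (Fin d × Fin d) ℂ) (hΛ : Λ.IsHermitian)
    (hnorm : ‖Matrix.toEuclideanCLM (𝕜 := ℂ) Λ‖ ≤
      ((2 * (d : ℝ) * Real.sqrt (rhoMax d ρ)) ^ 2)⁻¹) :
    ((1 : SPoly d) - ∑ i, ∑ i', ∑ j, ∑ j',
        C (starRingEnd ℂ (Λ (i, j) (i', j'))) * momPoly i i' j j')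
      ∈ QMt d (Sloc d ρ) t :=
  stmt18_general ρ hmax t ht Λ hΛ hnorm
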